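/- Let V(ρ) = 2(1−6ρ²+ρ⁴)/(1+ρ²)². The functions h₀(ρ) := ρ/(1+ρ²) and h₁(ρ) := (1 + 9ρ² + 6ρ³·log((1−ρ)/(1+ρ))) / (3ρ²(1+ρ²)) both satisfy the homogeneous equation −(1−ρ²)h''(ρ) − (2(1−ρ²)/ρ)h'(ρ) + 2ρh'(ρ) + 2h(ρ) + (V(ρ)/ρ²)h(ρ) = 0 on (0,1), and their Wronskian satisfies h₀(ρ)h₁'(ρ) − h₀'(ρ)h₁(ρ) = −1/(ρ²(1−ρ²)) for all ρ ∈ (0,1). -/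

import Mathlib

/-!
Away from `ρ = 0` one has `h₁ = r + 2 h₀ L` with `r = (1 + 9ρ²)/(3ρ²(1 + ρ²))` rational and
`L = log((1 - ρ)/(1 + ρ))`, whose derivative `-2/(1 - ρ²)` is rational. Hence `h₀', h₀''` are
rational and `h₁', h₁''` are rational functions plus rational multiples of `L`; substituted into
the equation and the Wronskian, each claim becomes an identity of rational functions in `ρ` and
the single transcendental atom `L`.
-/

noncomputable def Vpot (ρ : ℝ) : ℝ := 2 * (1 - 6 * ρ ^ 2 + ρ ^ 4) / (1 + ρ ^ 2) ^ 2

noncomputable def h0 (ρ : ℝ) : ℝ := ρ / (1 + ρ ^ 2)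

noncomputable def h1 (ρ : ℝ) : ℝ :=
  (1 + 9 * ρ ^ 2 + 6 * ρ ^ 3 * Real.log ((1 - ρ) / (1 + ρ))) / (3 * ρ ^ 2 * (1 + ρ ^ 2))

open Filter Topology

theorem deriv_deriv_eq_of_hasDerivAt {𝕜 F : Type*} [NontriviallyNormedField 𝕜]
    [NormedAddCommGroup F] [NormedSpace 𝕜 F] {f f' : 𝕜 → F} {s : Set 𝕜} {x : 𝕜} {f'' : F}
    (hs : s ∈ 𝓝 x) (hf : ∀ y ∈ s, HasDerivAt f (f' y) y) (hf' : HasDerivAt f' f'' x) :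
    deriv (deriv f) x = f'' :=
  (eventuallyEq_of_mem hs fun y hy => (hf y hy).deriv).deriv_eq.trans hf'.deriv

noncomputable section

def logRatio (x : ℝ) : ℝ := Real.log ((1 - x) / (1 + x))

def logRatioDeriv (x : ℝ) : ℝ := -2 / (1 - x ^ 2)

theorem hasDerivAt_logRatio {x : ℝ} (hx : 1 - x ^ 2 ≠ 0) :
    HasDerivAt logRatio (logRatioDeriv x) x := by
  obtain ⟨hm, hp⟩ : 1 - x ≠ 0 ∧ 1 + x ≠ 0 :=
    mul_ne_zero_iff.mp (by rwa [← show 1 - x ^ 2 = (1 - x) * (1 + x) by ring])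
  have hq := ((hasDerivAt_id x).const_sub 1).div ((hasDerivAt_id x).const_add 1) hp
  refine (hq.log (div_ne_zero hm hp)).congr_deriv ?_
  simp only [id, Pi.div_apply, logRatioDeriv]
  field_simp
  ring

theorem hasDerivAt_logRatioDeriv {x : ℝ} (hx : 1 - x ^ 2 ≠ 0) :
    HasDerivAt logRatioDeriv (-4 * x / (1 - x ^ 2) ^ 2) x := by
  refine ((hasDerivAt_const x (-2 : ℝ)).div ((hasDerivAt_pow 2 x).const_sub 1) hx).congr_deriv ?_
  ring

def h0Deriv (x : ℝ) : ℝ := (1 - x ^ 2) / (1 + x ^ 2) ^ 2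

theorem hasDerivAt_h0 (x : ℝ) : HasDerivAt h0 (h0Deriv x) x := by
  have hp : 1 + x ^ 2 ≠ 0 := by positivity
  refine ((hasDerivAt_id x).div ((hasDerivAt_pow 2 x).const_add 1) hp).congr_deriv ?_
  simp only [id, h0Deriv]
  field_simp
  ring

theorem hasDerivAt_h0Deriv (x : ℝ) :
    HasDerivAt h0Deriv (2 * x * (x ^ 2 - 3) / (1 + x ^ 2) ^ 3) x := by
  have hp : 1 + x ^ 2 ≠ 0 := by positivity
  refine (((hasDerivAt_pow 2 x).const_sub 1).div
    (((hasDerivAt_pow 2 x).const_add 1).pow 2) (pow_ne_zero 2 hp)).congr_deriv ?_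
  simp only [Pi.pow_apply]
  field_simp
  ring

def h1Rat (x : ℝ) : ℝ := (1 + 9 * x ^ 2) / (3 * x ^ 2 * (1 + x ^ 2))

-- At `x = 0` both sides are `0` through the junk value `1 / 0 = 0`, so the equality is global.
theorem h1_eq : h1 = fun x => h1Rat x + 2 * (h0 x * logRatio x) := by
  funext x
  rcases eq_or_ne x 0 with rfl | hx
  · simp [h1, h1Rat, h0]
  · simp only [h1, h1Rat, h0, logRatio]
    field_simp
    ring

def h1RatDeriv (x : ℝ) : ℝ := -2 / (3 * x ^ 3) - 16 * x / (3 * (1 + x ^ 2) ^ 2)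

theorem hasDerivAt_h1Rat {x : ℝ} (hx : x ≠ 0) : HasDerivAt h1Rat (h1RatDeriv x) x := by
  have hd : 3 * x ^ 2 * (1 + x ^ 2) ≠ 0 := by positivity
  refine ((((hasDerivAt_pow 2 x).const_mul 9).const_add 1).div
    (((hasDerivAt_pow 2 x).const_mul 3).mul ((hasDerivAt_pow 2 x).const_add 1)) hd).congr_deriv ?_
  simp only [Pi.mul_apply, h1RatDeriv]
  field_simp
  ring

theorem hasDerivAt_h1RatDeriv {x : ℝ} (hx : x ≠ 0) :
    HasDerivAt h1RatDeriv (2 / x ^ 4 - 16 * (1 - 3 * x ^ 2) / (3 * (1 + x ^ 2) ^ 3)) x := by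
  have hp : 1 + x ^ 2 ≠ 0 := by positivity
  refine (((hasDerivAt_const x (-2 : ℝ)).div ((hasDerivAt_pow 3 x).const_mul 3)
    (by positivity)).sub (((hasDerivAt_id x).const_mul 16).div
    (((hasDerivAt_pow 2 x).const_add 1).pow 2 |>.const_mul 3)
    (mul_ne_zero three_ne_zero (pow_ne_zero 2 hp)))).congr_deriv ?_
  simp only [id, Pi.pow_apply]
  field_simp
  ring

def h1Deriv (x : ℝ) : ℝ :=
  h1RatDeriv x + 2 * (h0Deriv x * logRatio x + h0 x * logRatioDeriv x)

theorem hasDerivAt_h1 {x : ℝ} (h₀ : x ≠ 0) (hx : 1 - x ^ 2 ≠ 0) :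
    HasDerivAt h1 (h1Deriv x) x := by
  rw [h1_eq]
  exact (hasDerivAt_h1Rat h₀).add
    (((hasDerivAt_h0 x).mul (hasDerivAt_logRatio hx)).const_mul 2)

theorem hasDerivAt_h1Deriv {x : ℝ} (h₀ : x ≠ 0) (hx : 1 - x ^ 2 ≠ 0) :
    HasDerivAt h1Deriv (2 / x ^ 4 - 16 * (1 - 3 * x ^ 2) / (3 * (1 + x ^ 2) ^ 3)
      + 2 * (2 * x * (x ^ 2 - 3) / (1 + x ^ 2) ^ 3 * logRatio x
        + 2 * h0Deriv x * logRatioDeriv x + h0 x * (-4 * x / (1 - x ^ 2) ^ 2))) x := by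
  have := (hasDerivAt_h1RatDeriv h₀).add
    ((((hasDerivAt_h0Deriv x).mul (hasDerivAt_logRatio hx)).add
      ((hasDerivAt_h0 x).mul (hasDerivAt_logRatioDeriv hx))).const_mul 2)
  exact this.congr_deriv (by ring)

end

/-- `h₀` and `h₁` form a fundamental system of the homogeneous equation
`(E_λ)` with `λ = 1`, with Wronskian `h₀h₁' − h₀'h₁ = −1/(ρ²(1−ρ²))` on `(0,1)`. -/
theorem stmt_18 : ∀ ρ ∈ Set.Ioo (0:ℝ) 1,
    (-(1 - ρ ^ 2) * deriv (deriv h0) ρ - (2 * (1 - ρ ^ 2) / ρ) * deriv h0 ρ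
      + 2 * ρ * deriv h0 ρ + 2 * h0 ρ + (Vpot ρ / ρ ^ 2) * h0 ρ = 0) ∧
    (-(1 - ρ ^ 2) * deriv (deriv h1) ρ - (2 * (1 - ρ ^ 2) / ρ) * deriv h1 ρ
      + 2 * ρ * deriv h1 ρ + 2 * h1 ρ + (Vpot ρ / ρ ^ 2) * h1 ρ = 0) ∧
    h0 ρ * deriv h1 ρ - deriv h0 ρ * h1 ρ = -1 / (ρ ^ 2 * (1 - ρ ^ 2)) := by
  rintro ρ ⟨hρ₀, hρ₁⟩
  have hIoo : ∀ x ∈ Set.Ioo (0:ℝ) 1, HasDerivAt h1 (h1Deriv x) x := fun x hx =>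
    hasDerivAt_h1 hx.1.ne' (by nlinarith [hx.1, hx.2])
  have hm : 1 - ρ ^ 2 ≠ 0 := by nlinarith
  have hρ : ρ ≠ 0 := hρ₀.ne'
  have hd0 : deriv h0 = h0Deriv := funext fun x => (hasDerivAt_h0 x).deriv
  have hdd0 := deriv_deriv_eq_of_hasDerivAt univ_mem (fun x _ => hasDerivAt_h0 x)
    (hasDerivAt_h0Deriv ρ)
  have hd1 := (hIoo ρ ⟨hρ₀, hρ₁⟩).deriv
  have hdd1 := deriv_deriv_eq_of_hasDerivAt (Ioo_mem_nhds hρ₀ hρ₁) hIoo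
    (hasDerivAt_h1Deriv hρ hm)
  rw [hdd0, hdd1, hd0, hd1]
  simp only [h1Deriv, h1RatDeriv, h0Deriv, logRatioDeriv, logRatio, h0, h1, Vpot]
  refine ⟨?_, ?_, ?_⟩ <;> field_simp <;> ring
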